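/- Let x ∈ X_{n,k} with cyclic parenthesis matching applied, and let y be a Dyck word of length 2ℓ ≥ 2. Then the number of cyclic descents of y (occurrences of 10) equals |W(y)|, where W is defined by: W(1 u 0) = {1} if u = ε, W(1 u 0) = W(u) ⊕ 1 if u ≠ ε, and W(y_1 ⋯ y_m) = W(y_1) ∪ ⋯ ∪ W(y_m) for y_i ∈ D'. -/

import Mathlib

/-!
A Dyck word ends in `0`, so its cyclic descents are its linear descents. Linear descents add up
over the factorisation `y = y₁ ⋯ y_m` into words of `D'` (each factor ends in `0`), the word
`1 u 0` has exactly the descents of `u` when `u ≠ ε` (since `u` starts with `1`), and `X ⊕ 1`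
has the same cardinality as `X`. Hence the descent count obeys the recursion defining `|W|`.
Existence of `W(y)` follows by cutting `y` at its first return to the axis.
-/

/-- A Dyck word: equal numbers of 1s (`true`) and 0s (`false`), with every prefix
containing at least as many 1s as 0s. -/
def IsDyck (w : List Bool) : Prop :=
  w.count true = w.count false ∧
    ∀ i, (w.take i).count false ≤ (w.take i).count true

/-- A word in `D'`: a nonempty Dyck word with strictly more 1s than 0s in every proper
nonempty prefix, i.e. a word `1 u 0` with `u ∈ D`. -/
def IsPrimeDyck (w : List Bool) : Prop :=
  IsDyck w ∧ w ≠ [] ∧ ∀ i, 0 < i → i < w.length →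
    (w.take i).count false < (w.take i).count true

/-- `X ⊕ 1`: increment one of the largest elements of the multiset `X` by `1`. -/
def oplusOne (S : Multiset ℕ) : Multiset ℕ := (S.sup + 1) ::ₘ S.erase S.sup

/-- The recursion `W`: `W(10) = {1}`; `W(1 u 0) = W(u) ⊕ 1` for `u ≠ ε`;
`W(y₁ ⋯ y_m) = W(y₁) ∪ ⋯ ∪ W(y_m)` for the prime factorization. -/
inductive WSpec : List Bool → Multiset ℕ → Prop
  | app {y₁ y₂ : List Bool} {S₁ S₂ : Multiset ℕ} :
      IsPrimeDyck y₁ → IsDyck y₂ → y₂ ≠ [] →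
      WSpec y₁ S₁ → WSpec y₂ S₂ → WSpec (y₁ ++ y₂) (S₁ + S₂)
  | single : WSpec [true, false] {1}
  | step {u : List Bool} {S : Multiset ℕ} :
      IsDyck u → u ≠ [] → WSpec u S → WSpec (true :: (u ++ [false])) (oplusOne S)

/-- The number of cyclic descents (occurrences of `10`) of a word. -/
def cyclicDescents (x : List Bool) : ℕ :=
  ((List.range x.length).filter
    (fun i => x.getD i false && !(x.getD ((i + 1) % x.length) false))).length

theorem Multiset.sup_mem_of_ne_zero {α : Type*} [LinearOrder α] [OrderBot α] {S : Multiset α}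
    (h : S ≠ 0) : S.sup ∈ S := by
  induction S using Multiset.induction with
  | empty => exact absurd rfl h
  | cons a T ih =>
    rcases eq_or_ne T 0 with rfl | hT
    · simp
    · rw [Multiset.sup_cons]
      exact sup_ind (p := (· ∈ a ::ₘ T)) a T.sup (mem_cons_self a T) (mem_cons_of_mem (ih hT))

theorem card_oplusOne {S : Multiset ℕ} (h : S ≠ 0) : (oplusOne S).card = S.card := by
  rw [oplusOne, Multiset.card_cons, Multiset.card_erase_of_mem (S.sup_mem_of_ne_zero h)]
  exact Nat.succ_pred_eq_of_pos (Multiset.card_pos.mpr h)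

def descents (x : List Bool) : ℕ :=
  ((List.range x.length).filter (fun i => x.getD i false && !(x.getD (i + 1) false))).length

theorem descents_nil : descents [] = 0 := rfl

theorem descents_cons (a : Bool) (l : List Bool) :
    descents (a :: l) = (if a && !(l.getD 0 false) then 1 else 0) + descents l := by
  unfold descents
  rw [List.length_cons, List.range_succ_eq_map, List.filter_cons]
  simp only [List.getD_cons_zero, List.getD_cons_succ, List.filter_map]
  rw [Function.comp_def]
  split <;> simp +arith

theorem descents_append {l₁ : List Bool} (l₂ : List Bool) (h : l₁.getLast? ≠ some true) :
    descents (l₁ ++ l₂) = descents l₁ + descents l₂ := by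
  induction l₁ with
  | nil => simp [descents_nil]
  | cons a t ih =>
    rcases eq_or_ne t [] with rfl | ht
    · obtain rfl : a = false := by simpa using h
      simp [descents_cons, descents_nil]
    · rw [List.getLast?_cons_of_ne_nil ht] at h
      obtain ⟨b, t, rfl⟩ := List.exists_cons_of_ne_nil ht
      rw [List.cons_append, descents_cons, descents_cons, ih h]
      simp only [List.cons_append, List.getD_cons_zero]
      omega

theorem cyclicDescents_eq_descents {x : List Bool} (h : x.getLast? = some false) :
    cyclicDescents x = descents x := by
  unfold cyclicDescents descents
  congr 1
  refine List.filter_congr fun i hi => ?_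
  rw [List.mem_range] at hi
  rcases (Nat.succ_le_of_lt hi).lt_or_eq with hlt | heq
  · rw [Nat.mod_eq_of_lt hlt]
  · have hlast : x[i]?.getD false = false := by
      rw [show i = x.length - 1 by omega, ← List.getLast?_eq_getElem?, h]
      rfl
    simp [hlast]

theorem IsDyck.exists_eq_cons_append {y : List Bool} (h : IsDyck y) (hne : y ≠ []) :
    ∃ t, y = true :: (t ++ [false]) := by
  obtain ⟨a, s, rfl⟩ := List.exists_cons_of_ne_nil hne
  obtain rfl : a = true := by
    have h1 := h.2 1
    cases a <;> simp at h1 ⊢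
  obtain rfl | ⟨t, b, rfl⟩ := s.eq_nil_or_concat
  · simpa using h.1
  rw [List.concat_eq_append] at h ⊢
  refine ⟨t, ?_⟩
  cases b
  · rfl
  · have hpre := h.2 (t.length + 1)
    rw [← List.cons_append, List.take_left' (by simp)] at hpre
    have htot := h.1
    simp only [List.count_cons, List.count_append, List.count_nil, beq_iff_eq,
      Bool.true_eq_false, if_true, if_false] at hpre htot
    omega

theorem IsDyck.getLast?_eq {y : List Bool} (h : IsDyck y) (hne : y ≠ []) :
    y.getLast? = some false := by
  obtain ⟨t, rfl⟩ := h.exists_eq_cons_append hne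
  rw [← List.cons_append, List.getLast?_concat]

theorem IsDyck.take {y : List Bool} (h : IsDyck y) {m : ℕ}
    (hm : (y.take m).count true = (y.take m).count false) : IsDyck (y.take m) :=
  ⟨hm, fun i => by rw [List.take_take]; exact h.2 _⟩

theorem IsDyck.drop {y : List Bool} (h : IsDyck y) {m : ℕ}
    (hm : (y.take m).count true = (y.take m).count false) : IsDyck (y.drop m) := by
  have htot := h.1
  rw [← List.take_append_drop m y, List.count_append, List.count_append] at htot
  refine ⟨by omega, fun i => ?_⟩
  have hpre := h.2 (m + i)
  rw [List.take_add, List.count_append, List.count_append] at hpre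
  omega

theorem IsDyck.exists_isPrimeDyck_append {y : List Bool} (h : IsDyck y) (hne : y ≠ []) :
    ∃ y₁ y₂, y = y₁ ++ y₂ ∧ IsPrimeDyck y₁ ∧ IsDyck y₂ := by
  have hP : ∃ m, 0 < m ∧ (y.take m).count true = (y.take m).count false :=
    ⟨y.length, List.length_pos_iff.mpr hne, by rw [List.take_length]; exact h.1⟩
  obtain ⟨hm₀, hm⟩ := Nat.find_spec hP
  have hmlen : Nat.find hP ≤ y.length :=
    Nat.find_min' hP ⟨List.length_pos_iff.mpr hne, by rw [List.take_length]; exact h.1⟩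
  refine ⟨_, _, (List.take_append_drop (Nat.find hP) y).symm,
    ⟨h.take hm, List.ne_nil_of_length_pos (by rw [List.length_take]; omega),
      fun i hi₀ hi => ?_⟩, h.drop hm⟩
  rw [List.length_take, min_eq_left hmlen] at hi
  have hfirst := Nat.find_min hP hi
  have hpre := h.2 i
  rw [List.take_take, min_eq_left hi.le]
  omega

theorem IsPrimeDyck.exists_isDyck_eq {y : List Bool} (h : IsPrimeDyck y) :
    ∃ u, IsDyck u ∧ y = true :: (u ++ [false]) := by
  obtain ⟨hd, hne, hstrict⟩ := h
  obtain ⟨u, rfl⟩ := hd.exists_eq_cons_append hne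
  have htot : u.count true = u.count false := by simpa using hd.1
  refine ⟨u, ⟨by omega, fun i => ?_⟩, rfl⟩
  rcases le_or_gt u.length i with hle | hlt
  · rw [List.take_of_length_le hle]
    omega
  · have hlen : i + 1 < (true :: (u ++ [false])).length := by
      simp only [List.length_cons, List.length_append, List.length_nil]
      omega
    have hs := hstrict (i + 1) (by omega) hlen
    rw [List.take_succ_cons, List.take_append_of_le_length hlt.le] at hs
    simp only [List.count_cons, beq_iff_eq, Bool.true_eq_false, if_true, if_false] at hs
    omega

theorem WSpec.ne_zero {y : List Bool} {S : Multiset ℕ} (w : WSpec y S) : S ≠ 0 := by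
  induction w with
  | app _ _ _ _ _ ih₁ _ => exact fun hz => ih₁ (add_eq_zero.mp hz).1
  | single => simp
  | step _ _ _ _ => exact Multiset.cons_ne_zero

theorem WSpec.descents_eq_card {y : List Bool} {S : Multiset ℕ} (w : WSpec y S) :
    descents y = S.card := by
  induction w with
  | app h₁ _ _ _ _ ih₁ ih₂ =>
    rw [descents_append _ (by simp [h₁.1.getLast?_eq h₁.2.1]), ih₁, ih₂, Multiset.card_add]
  | single => rfl
  | step hu hune w ih =>
    rw [descents_cons, descents_append _ (by simp [hu.getLast?_eq hune]), ih,
      card_oplusOne w.ne_zero]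
    obtain ⟨t, rfl⟩ := hu.exists_eq_cons_append hune
    simp [descents_cons, descents_nil]

theorem IsDyck.exists_wSpec {y : List Bool} (hy : IsDyck y) (hne : y ≠ []) :
    ∃ S, WSpec y S := by
  obtain ⟨y₁, y₂, rfl, hp, hd₂⟩ := hy.exists_isPrimeDyck_append hne
  obtain ⟨u, hu, rfl⟩ := hp.exists_isDyck_eq
  have hprime : ∃ S, WSpec (true :: (u ++ [false])) S := by
    rcases eq_or_ne u [] with rfl | hu₀
    · exact ⟨_, .single⟩
    · obtain ⟨S, hS⟩ := hu.exists_wSpec hu₀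
      exact ⟨_, .step hu hu₀ hS⟩
  obtain ⟨S₁, h₁⟩ := hprime
  rcases eq_or_ne y₂ [] with rfl | h₂
  · exact ⟨S₁, by simpa using h₁⟩
  · obtain ⟨S₂, hS₂⟩ := hd₂.exists_wSpec h₂
    exact ⟨_, .app hp hd₂ h₂ h₁ hS₂⟩
termination_by y.length
decreasing_by all_goals subst_vars; simp only [List.length_append, List.length_cons]; omega

/-- For any nonempty Dyck word `y`, the number of (cyclic) descents of `y` equals
`|W(y)|`. -/
theorem descents_eq_W_card (y : List Bool) (hy : IsDyck y) (hne : y ≠ []) :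
    (∃ S, WSpec y S) ∧ ∀ S, WSpec y S → cyclicDescents y = S.card :=
  ⟨hy.exists_wSpec hne, fun _ w =>
    (cyclicDescents_eq_descents (hy.getLast?_eq hne)).trans w.descents_eq_card⟩
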